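/- If the flow map of the C¹ vector field f preserves a stationary profile on the backward orbit of x, then the density at x equals the stationary value: specifically, let ρ_s solve φ(x, ρ_s(x)) − ∇·(ρ_s f)(x) = 0 for all x, and let ρ(t,·) be the Liouville solution with initial condition ρ₀. For fixed x, if there is T ≥ 0 such that ρ₀(Φ_f(x,−t)) = ρ_s(Φ_f(x,−t)) for all t ≥ T, then ρ(t,x) = ρ_s(x) for all t ≥ T. -/

import Mathlib

theorem flow_neg_flow {X : Type*} (Φ : X → ℝ → X) (hΦ0 : ∀ x, Φ x 0 = x)
    (hΦadd : ∀ x s t, Φ (Φ x s) t = Φ x (s + t)) (x : X) (t : ℝ) :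
    Φ (Φ x (-t)) t = x := by
  rw [hΦadd, neg_add_cancel, hΦ0]

theorem eq_of_eq_at_flow_neg {X : Type*} (Φ : X → ℝ → X) (hΦ0 : ∀ x, Φ x 0 = x)
    (hΦadd : ∀ x s t, Φ (Φ x s) t = Φ x (s + t)) (u v : ℝ → X → ℝ)
    (hdet : ∀ y, u 0 y = v 0 y → ∀ τ, u τ (Φ y τ) = v τ (Φ y τ))
    (x : X) (t : ℝ) (h : u 0 (Φ x (-t)) = v 0 (Φ x (-t))) : u t x = v t x := by
  simpa only [flow_neg_flow Φ hΦ0 hΦadd] using hdet _ h t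

theorem stmt_12_general (n : ℕ)
    (Φ : (Fin n → ℝ) → ℝ → (Fin n → ℝ))
    (hΦ0 : ∀ x, Φ x 0 = x)
    (hΦadd : ∀ x s t, Φ (Φ x s) t = Φ x (s + t))
    (divf : (Fin n → ℝ) → ℝ)
    (φ : (Fin n → ℝ) → ℝ → ℝ)
    (ρ : ℝ → (Fin n → ℝ) → ℝ) (ρ₀ ρs : (Fin n → ℝ) → ℝ)
    (hinit : ∀ x, ρ 0 x = ρ₀ x)
    -- the density evolves along trajectories according to the extended ODE
    (hρode : ∀ x t, HasDerivAt (fun τ => ρ τ (Φ x τ))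
        (φ (Φ x t) (ρ t (Φ x t)) - divf (Φ x t) * ρ t (Φ x t)) t)
    -- the stationary profile satisfies the same ODE along trajectories
    (hρsode : ∀ x t, HasDerivAt (fun τ => ρs (Φ x τ))
        (φ (Φ x t) (ρs (Φ x t)) - divf (Φ x t) * ρs (Φ x t)) t)
    -- uniqueness of solutions of the extended ODE along trajectories
    (huniq : ∀ x (g₁ g₂ : ℝ → ℝ),
        (∀ t, HasDerivAt g₁ (φ (Φ x t) (g₁ t) - divf (Φ x t) * g₁ t) t) →
        (∀ t, HasDerivAt g₂ (φ (Φ x t) (g₂ t) - divf (Φ x t) * g₂ t) t) →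
        g₁ 0 = g₂ 0 → g₁ = g₂)
    (x : Fin n → ℝ) (T : ℝ)
    (hmatch : ∀ t, T ≤ t → ρ₀ (Φ x (-t)) = ρs (Φ x (-t))) :
    ∀ t, T ≤ t → ρ t x = ρs x := by
  intro t ht
  refine eq_of_eq_at_flow_neg Φ hΦ0 hΦadd ρ (fun _ => ρs) (fun y h0 => ?_) x t
    ((hinit _).trans (hmatch t ht))
  refine congrFun (huniq y _ _ (hρode y) (hρsode y) ?_)
  simpa only [hΦ0] using h0

theorem stmt_12 (n : ℕ) (f : (Fin n → ℝ) → (Fin n → ℝ)) (hf : ContDiff ℝ 1 f)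
    (Φ : (Fin n → ℝ) → ℝ → (Fin n → ℝ))
    (hΦ0 : ∀ x, Φ x 0 = x)
    (hΦflow : ∀ x, ∀ t, HasDerivAt (Φ x) (f (Φ x t)) t)
    (hΦadd : ∀ x s t, Φ (Φ x s) t = Φ x (s + t))
    (divf : (Fin n → ℝ) → ℝ)
    (hdivf : ∀ x, divf x = ∑ i, fderiv ℝ (fun z => f z i) x (Pi.single i 1))
    (φ : (Fin n → ℝ) → ℝ → ℝ)
    (ρ : ℝ → (Fin n → ℝ) → ℝ) (ρ₀ ρs : (Fin n → ℝ) → ℝ)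
    (hinit : ∀ x, ρ 0 x = ρ₀ x)
    -- the density evolves along trajectories according to the extended ODE
    (hρode : ∀ x t, HasDerivAt (fun τ => ρ τ (Φ x τ))
        (φ (Φ x t) (ρ t (Φ x t)) - divf (Φ x t) * ρ t (Φ x t)) t)
    -- the stationary profile satisfies the same ODE along trajectories
    (hρsode : ∀ x t, HasDerivAt (fun τ => ρs (Φ x τ))
        (φ (Φ x t) (ρs (Φ x t)) - divf (Φ x t) * ρs (Φ x t)) t)
    -- uniqueness of solutions of the extended ODE along trajectories
    (huniq : ∀ x (g₁ g₂ : ℝ → ℝ),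
        (∀ t, HasDerivAt g₁ (φ (Φ x t) (g₁ t) - divf (Φ x t) * g₁ t) t) →
        (∀ t, HasDerivAt g₂ (φ (Φ x t) (g₂ t) - divf (Φ x t) * g₂ t) t) →
        g₁ 0 = g₂ 0 → g₁ = g₂)
    (x : Fin n → ℝ) (T : ℝ) (hT : 0 ≤ T)
    (hmatch : ∀ t, T ≤ t → ρ₀ (Φ x (-t)) = ρs (Φ x (-t))) :
    ∀ t, T ≤ t → ρ t x = ρs x :=
  stmt_12_general n Φ hΦ0 hΦadd divf φ ρ ρ₀ ρs hinit hρode hρsode huniq x T hmatch
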